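/- arXiv:1112.5125 — 4 statements merged into one kernel-verified Lean document; each statement's English description precedes it below -/
import Mathlib

section
/- Let 0 < T₁ ≤ T₂ and let A : [T₁, T₂] → ℝ be a lower semicontinuous function with A(t) ≥ 0 for all t ∈ [T₁, T₂]. Assume that for every t₀ ∈ [T₁, T₂) the upper right Dini derivative satisfies D⁺A(t₀) ≤ (3/(4t₀))·A(t₀) − 4π. Then for every t ∈ [T₁, T₂] one has t⁻¹·A(t) ≤ T₁⁻¹·A(T₁) − 4π·(log t − log T₁). -/
open Filter Set

/-- The upper right Dini derivative `D⁺f(t) = limsup_{h → 0⁺} (f(t+h) - f(t))/h`,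
taking values in the extended reals. -/
noncomputable def upperDiniDeriv (f : ℝ → ℝ) (t : ℝ) : EReal :=
  Filter.limsup (fun h : ℝ => (((f (t + h) - f t) / h : ℝ) : EReal))
    (nhdsWithin 0 (Set.Ioi 0))

open Topology

/-!
The quantity `t⁻¹ A(t) + 4π log t` is nonincreasing: its upper right Dini derivative is at
most `-A(t)/(4t²) ≤ 0`. Since it is lower semicontinuous, the set where it stays below its
initial value plus `ε (t - T₁)` is closed, and the Dini bound lets this set be pushed to the
right, so by continuous induction it contains `[T₁, T₂]`; then let `ε → 0`.
-/

theorem ContinuousWithinAt.mul_lowerSemicontinuousWithinAt {α : Type*} [TopologicalSpace α]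
    {c f : α → ℝ} {s : Set α} {x : α} (hc : ContinuousWithinAt c s x) (hcx : 0 < c x)
    (hf : LowerSemicontinuousWithinAt f s x) :
    LowerSemicontinuousWithinAt (fun x' => c x' * f x') s x := by
  intro y hy
  obtain ⟨y', hyy', hy'f⟩ := exists_between ((div_lt_iff₀' hcx).2 hy)
  have hcy' : ∀ᶠ x' in 𝓝[s] x, y < c x' * y' :=
    (hc.tendsto.mul_const y').eventually (lt_mem_nhds ((div_lt_iff₀' hcx).1 hyy'))
  filter_upwards [hcy', hf y' hy'f, hc.tendsto.eventually (lt_mem_nhds hcx)]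
    with x' hx'y hx'f hx'c
  exact hx'y.trans (mul_lt_mul_of_pos_left hx'f hx'c)

theorem ContinuousOn.mul_lowerSemicontinuousOn {α : Type*} [TopologicalSpace α]
    {c f : α → ℝ} {s : Set α} (hc : ContinuousOn c s) (hcpos : ∀ x ∈ s, 0 < c x)
    (hf : LowerSemicontinuousOn f s) :
    LowerSemicontinuousOn (fun x => c x * f x) s := fun x hx =>
  (hc x hx).mul_lowerSemicontinuousWithinAt (hcpos x hx) (hf x hx)

theorem LowerSemicontinuousOn.le_add_mul_sub_of_frequently {f : ℝ → ℝ} {a b ε : ℝ}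
    (hf : LowerSemicontinuousOn f (Icc a b))
    (hf' : ∀ x ∈ Ico a b, ∃ᶠ h in 𝓝[>] 0, f (x + h) ≤ f x + ε * h) :
    ∀ x ∈ Icc a b, f x ≤ f a + ε * (x - a) := by
  set s := (fun x => f x - ε * (x - a)) ⁻¹' Iic (f a)
  have hclosed : IsClosed (s ∩ Icc a b) := by
    have hlsc : LowerSemicontinuousOn (fun x => f x + -(ε * (x - a))) (Icc a b) :=
      hf.add (by fun_prop : Continuous fun x => -(ε * (x - a))).continuousOn.lowerSemicontinuousOn
    obtain ⟨v, hv, hsv⟩ := lowerSemicontinuousOn_iff_preimage_Iic.1 hlsc (f a)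
    simp only [← sub_eq_add_neg] at hsv
    rw [inter_comm, hsv]
    exact isClosed_Icc.inter hv
  have hsub : Icc a b ⊆ s := by
    refine hclosed.Icc_subset_of_forall_exists_gt (by simp [s]) ?_
    rintro x ⟨hxs, hx⟩ y hxy
    obtain ⟨h, hfh, hh, hhy⟩ := ((hf' x hx).and_eventually
      (Ioo_mem_nhdsGT (sub_pos.2 (mem_Ioi.1 hxy)))).exists
    refine ⟨x + h, ?_, by linarith, by linarith⟩
    simp only [s, mem_preimage, mem_Iic] at hxs ⊢
    linarith
  intro x hx
  have := hsub hx
  simp only [s, mem_preimage, mem_Iic] at this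
  linarith

theorem LowerSemicontinuousOn.le_left_of_frequently_le_add_mul {f : ℝ → ℝ} {a b : ℝ}
    (hf : LowerSemicontinuousOn f (Icc a b))
    (hf' : ∀ x ∈ Ico a b, ∀ ε > 0, ∃ᶠ h in 𝓝[>] 0, f (x + h) ≤ f x + ε * h) :
    ∀ x ∈ Icc a b, f x ≤ f a := by
  intro x hx
  have hlim : Tendsto (fun ε => f a + ε * (x - a)) (𝓝[>] 0) (𝓝 (f a)) :=
    ((continuous_const.add (continuous_id.mul continuous_const)).tendsto'
      0 (f a) (by simp)).mono_left nhdsWithin_le_nhds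
  refine ge_of_tendsto hlim ?_
  filter_upwards [self_mem_nhdsWithin] with ε hε
  exact hf.le_add_mul_sub_of_frequently (fun y hy => hf' y hy ε hε) x hx

theorem eventually_lt_of_upperDiniDeriv_lt {f : ℝ → ℝ} {x r : ℝ}
    (hr : upperDiniDeriv f x < r) : ∀ᶠ h in 𝓝[>] 0, f (x + h) < f x + r * h := by
  filter_upwards [eventually_lt_of_limsup_lt hr, self_mem_nhdsWithin] with h hlt hh
  rw [EReal.coe_lt_coe_iff, div_lt_iff₀ hh] at hlt
  linarith

theorem HasDerivAt.eventually_le_add_mul {f : ℝ → ℝ} {f' x ε : ℝ} (hf : HasDerivAt f f' x)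
    (hε : f' < ε) : ∀ᶠ h in 𝓝[>] 0, f (x + h) ≤ f x + ε * h := by
  filter_upwards [hf.tendsto_slope_zero_right.eventually (gt_mem_nhds hε), self_mem_nhdsWithin]
    with h hlt hh
  rw [smul_eq_mul, inv_mul_lt_iff₀ hh] at hlt
  linarith

noncomputable def normalizedArea (A : ℝ → ℝ) (t : ℝ) : ℝ :=
  t⁻¹ * A t + 4 * Real.pi * Real.log t

theorem lowerSemicontinuousOn_normalizedArea {A : ℝ → ℝ} {a b : ℝ} (ha : 0 < a)
    (hA : LowerSemicontinuousOn A (Icc a b)) :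
    LowerSemicontinuousOn (normalizedArea A) (Icc a b) := by
  have hpos : ∀ t ∈ Icc a b, 0 < t := fun t ht => ha.trans_le ht.1
  refine ((continuousOn_inv₀.mono fun t ht => (hpos t ht).ne').mul_lowerSemicontinuousOn
    (fun t ht => inv_pos.2 (hpos t ht)) hA).add (ContinuousOn.lowerSemicontinuousOn ?_)
  exact continuousOn_const.mul (Real.continuousOn_log.mono fun t ht => (hpos t ht).ne')

theorem eventually_normalizedArea_le {A : ℝ → ℝ} {x ε : ℝ} (hx : 0 < x) (hA : 0 ≤ A x)
    (hdini : upperDiniDeriv A x ≤ ((3 / (4 * x) * A x - 4 * Real.pi : ℝ) : EReal))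
    (hε : 0 < ε) :
    ∀ᶠ h in 𝓝[>] 0, normalizedArea A (x + h) ≤ normalizedArea A x + ε * h := by
  set r := 3 / (4 * x) * A x - 4 * Real.pi + ε * x / 2
  have hAr : ∀ᶠ h in 𝓝[>] 0, A (x + h) < A x + r * h :=
    eventually_lt_of_upperDiniDeriv_lt <| hdini.trans_lt <| EReal.coe_lt_coe_iff.2 <| by
      simp only [r]; linarith [mul_pos hε hx]
  -- `ψ` dominates `normalizedArea A` just right of `x`, agrees with it at `x`, and
  -- `ψ'(x) = ε / 2 - A x / (4 x²) < ε`.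
  set ψ : ℝ → ℝ := fun t => t⁻¹ * (A x + r * (t - x)) + 4 * Real.pi * Real.log t
  have hψ : HasDerivAt ψ
      (-(x ^ 2)⁻¹ * (A x + r * (x - x)) + x⁻¹ * (r * 1) + 4 * Real.pi * x⁻¹) x :=
    ((hasDerivAt_inv hx.ne').mul (((hasDerivAt_id x).sub_const x).const_mul r |>.const_add _)).add
      ((Real.hasDerivAt_log hx.ne').const_mul _)
  have hψε :
      -(x ^ 2)⁻¹ * (A x + r * (x - x)) + x⁻¹ * (r * 1) + 4 * Real.pi * x⁻¹ < ε := by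
    simp only [r, sub_self, mul_zero, add_zero, mul_one]
    field_simp
    nlinarith [mul_pos (pow_pos hx 2) hε]
  filter_upwards [hAr, hψ.eventually_le_add_mul hψε, self_mem_nhdsWithin] with h hAh hψh hh
  calc normalizedArea A (x + h) ≤ ψ (x + h) := by
        simp only [normalizedArea, ψ, add_sub_cancel_left]
        gcongr
        exact inv_nonneg.2 (add_pos hx hh).le
    _ ≤ ψ x + ε * h := hψh
    _ = normalizedArea A x + ε * h := by simp [ψ, normalizedArea]

theorem stmt0_general (T₁ T₂ : ℝ) (hT₁ : 0 < T₁) (A : ℝ → ℝ)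
    (hlsc : LowerSemicontinuousOn A (Set.Icc T₁ T₂))
    (hnonneg : ∀ t ∈ Set.Icc T₁ T₂, 0 ≤ A t)
    (hdini : ∀ t₀ ∈ Set.Ico T₁ T₂,
      upperDiniDeriv A t₀ ≤ (((3 / (4 * t₀)) * A t₀ - 4 * Real.pi : ℝ) : EReal)) :
    ∀ t ∈ Set.Icc T₁ T₂,
      t⁻¹ * A t ≤ T₁⁻¹ * A T₁ - 4 * Real.pi * (Real.log t - Real.log T₁) := by
  intro t ht
  have hmono := (lowerSemicontinuousOn_normalizedArea hT₁ hlsc).le_left_of_frequently_le_add_mul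
    (fun x hx ε hε => (eventually_normalizedArea_le (hT₁.trans_le hx.1)
      (hnonneg x (Ico_subset_Icc_self hx)) (hdini x hx) hε).frequently) t ht
  simp only [normalizedArea] at hmono
  linarith

theorem stmt0 (T₁ T₂ : ℝ) (hT₁ : 0 < T₁) (hT : T₁ ≤ T₂) (A : ℝ → ℝ)
    (hlsc : LowerSemicontinuousOn A (Set.Icc T₁ T₂))
    (hnonneg : ∀ t ∈ Set.Icc T₁ T₂, 0 ≤ A t)
    (hdini : ∀ t₀ ∈ Set.Ico T₁ T₂,
      upperDiniDeriv A t₀ ≤ (((3 / (4 * t₀)) * A t₀ - 4 * Real.pi : ℝ) : EReal)) :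
    ∀ t ∈ Set.Icc T₁ T₂,
      t⁻¹ * A t ≤ T₁⁻¹ * A T₁ - 4 * Real.pi * (Real.log t - Real.log T₁) :=
  stmt0_general T₁ T₂ hT₁ A hlsc hnonneg hdini
end

section
/- Let 0 < T₁ ≤ T₂ and let A : [T₁, T₂] → ℝ be a lower semicontinuous function such that A(t) > 0 for all t ∈ [T₁, T₂] and such that for every t₀ ∈ [T₁, T₂) the upper right Dini derivative satisfies D⁺A(t₀) ≤ (3/(4t₀))·A(t₀) − 4π. Then T₂ < T₁ · exp(A(T₁)/(4π·T₁)). -/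
/-!
With `κ = 4π`, the functions `B(t) = C (t/T₁)^{3/4} - 4κt` solve `B' = (3/(4t)) B - κ`. For a
lower semicontinuous `A` the set `{A ≤ φ}` is closed, and a strict bound `D⁺A < φ'` pushes it to
the right, so `A` stays below the solution with `B(T₁) = A(T₁)` (compare with `B + ε (t - T₁)` and
let `ε → 0`). With `r = (T₂/T₁)^{1/4}` this solution is `4κT₁ r³ (1 + A(T₁)/(4κT₁) - r)`, so
`A(T₂) > 0` forces `r < 1 + A(T₁)/(4κT₁) ≤ exp (A(T₁)/(4κT₁))`.
-/

open Filter Set Topology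

theorem upperDiniDeriv_eq_limsup_slope (f : ℝ → ℝ) (x : ℝ) :
    upperDiniDeriv f x = limsup (fun z => (slope f x z : EReal)) (𝓝[>] x) := by
  have : 𝓝[>] x = map (x + ·) (𝓝[>] 0) := by simp only [map_add_left_nhdsGT, add_zero]
  rw [this, ← limsup_comp, upperDiniDeriv]
  congr 1
  ext h
  simp [slope_def_field]

theorem eventually_lt_of_upperDiniDeriv_lt_s1 {f φ : ℝ → ℝ} {x φ' : ℝ}
    (hφ : HasDerivWithinAt φ φ' (Ici x) x) (hfx : f x ≤ φ x) (hD : upperDiniDeriv f x < φ') :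
    ∀ᶠ z in 𝓝[>] x, f z < φ z := by
  obtain ⟨m, hfm, hmφ⟩ := EReal.exists_between_coe_real hD
  rw [upperDiniDeriv_eq_limsup_slope] at hfm
  have hφslope : Tendsto (slope φ x) (𝓝[>] x) (𝓝 φ') := by
    simpa using hasDerivWithinAt_iff_tendsto_slope.mp hφ
  filter_upwards [eventually_lt_of_limsup_lt hfm,
    hφslope.eventually (eventually_gt_nhds (EReal.coe_lt_coe_iff.mp hmφ)),
    self_mem_nhdsWithin] with z hf hφ (hz : x < z)
  rw [EReal.coe_lt_coe_iff, slope_def_field, div_lt_iff₀ (sub_pos.mpr hz)] at hf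
  rw [slope_def_field, lt_div_iff₀ (sub_pos.mpr hz)] at hφ
  linarith

theorem image_le_of_upperDiniDeriv_lt_deriv_boundary {f φ φ' : ℝ → ℝ} {a b : ℝ}
    (hf : LowerSemicontinuousOn f (Icc a b)) (hφ : ContinuousOn φ (Icc a b))
    (hφ' : ∀ t ∈ Ico a b, HasDerivWithinAt φ (φ' t) (Ici t) t) (ha : f a ≤ φ a)
    (hD : ∀ t ∈ Ico a b, f t ≤ φ t → upperDiniDeriv f t < φ' t) :
    ∀ ⦃t⦄, t ∈ Icc a b → f t ≤ φ t := by
  have hclosed : IsClosed ({t | f t ≤ φ t} ∩ Icc a b) := by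
    obtain ⟨v, hv, hfv⟩ :=
      lowerSemicontinuousOn_iff_preimage_Iic.mp (hf.add hφ.neg.lowerSemicontinuousOn) 0
    convert isClosed_Icc.inter hv using 1
    rw [← hfv]
    ext t
    simp [and_comm, ← sub_eq_add_neg]
  refine hclosed.Icc_subset_of_forall_mem_nhdsWithin ha fun t ⟨htφ, ht⟩ => ?_
  exact (eventually_lt_of_upperDiniDeriv_lt_s1 (hφ' t ht) htφ (hD t ht htφ)).mono
    fun _ => le_of_lt

noncomputable def barrier (κ T₁ C t : ℝ) : ℝ := C * (t / T₁) ^ (3 / 4 : ℝ) - 4 * κ * t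

section Barrier

variable {κ T₁ C t : ℝ}

theorem hasDerivAt_barrier (hT₁ : 0 < T₁) (ht : 0 < t) :
    HasDerivAt (barrier κ T₁ C) (3 / (4 * t) * barrier κ T₁ C t - κ) t := by
  have hpow := ((hasDerivAt_id' t).div_const T₁).rpow_const (p := 3 / 4)
    (Or.inl (div_pos ht hT₁).ne')
  refine ((hpow.const_mul C).sub ((hasDerivAt_id' t).const_mul (4 * κ))).congr_deriv ?_
  rw [barrier, Real.rpow_sub_one (div_pos ht hT₁).ne']
  field_simp
  ring

theorem barrier_self (hT₁ : T₁ ≠ 0) : barrier κ T₁ C T₁ = C - 4 * κ * T₁ := by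
  simp [barrier, div_self hT₁]

theorem le_barrier_of_upperDiniDeriv_le {A : ℝ → ℝ} {T₂ : ℝ} (hT₁ : 0 < T₁) (hT : T₁ ≤ T₂)
    (hA : LowerSemicontinuousOn A (Icc T₁ T₂))
    (hD : ∀ t ∈ Ico T₁ T₂, upperDiniDeriv A t ≤ ((3 / (4 * t) * A t - κ : ℝ) : EReal)) :
    A T₂ ≤ barrier κ T₁ (A T₁ + 4 * κ * T₁) T₂ := by
  set B := barrier κ T₁ (A T₁ + 4 * κ * T₁)
  have hB : ∀ t ∈ Icc T₁ T₂, HasDerivAt B (3 / (4 * t) * B t - κ) t := fun t ht =>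
    hasDerivAt_barrier hT₁ (hT₁.trans_le ht.1)
  have hperturbed : ∀ ε > 0, A T₂ ≤ B T₂ + ε * (T₂ - T₁) := by
    intro ε hε
    refine image_le_of_upperDiniDeriv_lt_deriv_boundary (φ := fun t => B t + ε * (t - T₁))
      (φ' := fun t => 3 / (4 * t) * B t - κ + ε) hA ?_ ?_ ?_ ?_ (right_mem_Icc.mpr hT)
    · exact fun t ht => ((hB t ht).add (((hasDerivAt_id' t).sub_const T₁).const_mul ε))
        |>.continuousAt.continuousWithinAt
    · exact fun t ht => ((hB t (Ico_subset_Icc_self ht)).add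
        (((hasDerivAt_id' t).sub_const T₁).const_mul ε)).hasDerivWithinAt.congr_deriv (by ring)
    · simp [B, barrier_self hT₁.ne']
    · intro t ht hAt
      have ht₀ : 0 < t := hT₁.trans_le ht.1
      refine (hD t ht).trans_lt (EReal.coe_lt_coe_iff.mpr ?_)
      -- the perturbation grows by `ε` while the equation feeds back only `3ε(t - T₁)/(4t) < ε`
      have hfeedback : 3 / (4 * t) * (ε * (t - T₁)) < ε := by
        rw [div_mul_eq_mul_div, div_lt_iff₀ (by positivity)]
        nlinarith
      have := mul_le_mul_of_nonneg_left hAt (by positivity : (0 : ℝ) ≤ 3 / (4 * t))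
      linarith [mul_add (3 / (4 * t)) (B t) (ε * (t - T₁))]
  have hlim : Tendsto (fun ε => B T₂ + ε * (T₂ - T₁)) (𝓝[>] 0) (𝓝 (B T₂)) := by
    have : Continuous fun ε => B T₂ + ε * (T₂ - T₁) := by fun_prop
    simpa using this.continuousWithinAt.tendsto (s := Ioi 0) (x := 0)
  exact ge_of_tendsto hlim (eventually_nhdsWithin_of_forall hperturbed)

theorem lt_mul_exp_of_barrier_pos {a T₂ : ℝ} (hT₁ : 0 < T₁) (hT₂ : 0 < T₂) (hκ : 0 < κ)
    (h : 0 < barrier κ T₁ (a + 4 * κ * T₁) T₂) : T₂ < T₁ * Real.exp (a / (κ * T₁)) := by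
  set r := (T₂ / T₁) ^ (1 / 4 : ℝ)
  have hr4 : r ^ 4 = T₂ / T₁ := by
    rw [← Real.rpow_natCast, ← Real.rpow_mul (by positivity)]
    norm_num
  have hr3 : (T₂ / T₁) ^ (3 / 4 : ℝ) = r ^ 3 := by
    rw [← Real.rpow_natCast, ← Real.rpow_mul (by positivity)]
    norm_num
  have hT₂r : T₂ = T₁ * r ^ 4 := by rw [hr4]; field_simp
  have hr_lt : r < 1 + a / (4 * κ * T₁) := by
    have hfactor : barrier κ T₁ (a + 4 * κ * T₁) T₂
        = 4 * κ * T₁ * r ^ 3 * (1 + a / (4 * κ * T₁) - r) := by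
      rw [barrier, hr3, hT₂r]
      field_simp
      ring
    rw [hfactor] at h
    exact sub_pos.mp (pos_of_mul_pos_right h (by positivity))
  calc T₂ = T₁ * r ^ 4 := hT₂r
    _ < T₁ * Real.exp (a / (4 * κ * T₁)) ^ 4 := by
      gcongr
      linarith [Real.add_one_le_exp (a / (4 * κ * T₁))]
    _ = T₁ * Real.exp (a / (κ * T₁)) := by
      rw [← Real.exp_nat_mul]
      congr 2
      field_simp
      ring

end Barrier

theorem stmt1 (T₁ T₂ : ℝ) (hT₁ : 0 < T₁) (hT : T₁ ≤ T₂) (A : ℝ → ℝ)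
    (hlsc : LowerSemicontinuousOn A (Set.Icc T₁ T₂))
    (hpos : ∀ t ∈ Set.Icc T₁ T₂, 0 < A t)
    (hdini : ∀ t₀ ∈ Set.Ico T₁ T₂,
      upperDiniDeriv A t₀ ≤ (((3 / (4 * t₀)) * A t₀ - 4 * Real.pi : ℝ) : EReal)) :
    T₂ < T₁ * Real.exp (A T₁ / (4 * Real.pi * T₁)) := by
  have hA₂ : 0 < A T₂ := hpos T₂ (right_mem_Icc.mpr hT)
  have hbound := le_barrier_of_upperDiniDeriv_le (κ := 4 * Real.pi) hT₁ hT hlsc hdini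
  exact lt_mul_exp_of_barrier_pos hT₁ (hT₁.trans_le hT) (by positivity) (hA₂.trans_le hbound)
end

section
/- Let T₁ > 0, let A : [T₁, ∞) → ℝ be a lower semicontinuous function with A(t) ≥ 0 for all t, and let ε : [T₁, ∞) → ℝ be a function with ε(t) → 0 as t → ∞. Assume that for every t₀ ∈ [T₁, ∞) the upper right Dini derivative satisfies D⁺A(t₀) ≤ (3/(4t₀))·A(t₀) + ε(t₀). Then t⁻¹·A(t) → 0 as t → ∞. -/
open Filter Set

/-- Comparison lemma: if `A` is lower semicontinuous with Dini derivative bound,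
then `A` stays below the barrier `C t^{3/4} + 8 δ t`. -/
lemma dini_comparison (T₁ : ℝ) (hT₁ : 0 < T₁) (A ε : ℝ → ℝ)
    (hlsc : LowerSemicontinuousOn A (Set.Ici T₁))
    (hdini : ∀ t₀ ∈ Set.Ici T₁,
      upperDiniDeriv A t₀ ≤ (((3 / (4 * t₀)) * A t₀ + ε t₀ : ℝ) : EReal))
    (δ : ℝ) (hδ : 0 < δ) (T : ℝ) (hT : T₁ ≤ T)
    (hεδ : ∀ t, T ≤ t → ε t ≤ δ) (C : ℝ)
    (hCT : A T ≤ C * T ^ ((3:ℝ)/4)) :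
    ∀ t, T ≤ t → A t ≤ C * t ^ ((3:ℝ)/4) + 8 * δ * t := by
  set φ : ℝ → ℝ := fun t => C * t ^ ((3:ℝ)/4) + 8 * δ * t with hφ
  by_contra hcon
  push_neg at hcon
  obtain ⟨t₁, ht₁T, ht₁⟩ := hcon
  have hT0 : 0 < T := lt_of_lt_of_le hT₁ hT
  -- the set where A ≤ φ
  set S : Set ℝ := {s | s ∈ Set.Icc T t₁ ∧ A s ≤ φ s} with hS
  have hTS : T ∈ S := by
    refine ⟨⟨le_refl T, ht₁T⟩, ?_⟩
    have : (0:ℝ) ≤ 8 * δ * T := by positivity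
    simp only [hφ]; linarith
  have hSne : S.Nonempty := ⟨T, hTS⟩
  have hSbdd : BddAbove S := ⟨t₁, fun s hs => hs.1.2⟩
  set c := sSup S with hc
  have hTc : T ≤ c := le_csSup hSbdd hTS
  have hct₁ : c ≤ t₁ := csSup_le hSne fun s hs => hs.1.2
  have hc0 : 0 < c := lt_of_lt_of_le hT0 hTc
  have hcT₁ : T₁ ≤ c := le_trans hT hTc
  have hφcont : Continuous φ := by
    apply Continuous.add
    · exact continuous_const.mul (Real.continuous_rpow_const (by norm_num))
    · exact continuous_const.mul continuous_id
  -- Step 1 : A c ≤ φ c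
  have hAc : A c ≤ φ c := by
    by_contra hAc
    push_neg at hAc
    obtain ⟨y, hy1, hy2⟩ := exists_between hAc
    have h1 : ∀ᶠ x in nhdsWithin c (Set.Ici T₁), y < A x := hlsc c hcT₁ y hy2
    have h2 : ∀ᶠ x in nhdsWithin c (Set.Ici T₁), φ x < y :=
      ((hφcont.continuousAt.eventually_lt continuousAt_const hy1)).filter_mono
        nhdsWithin_le_nhds
    have h3 : ∀ᶠ x in nhdsWithin c (Set.Ici T₁), φ x < A x := by
      filter_upwards [h1, h2] with x hx1 hx2; linarith
    -- but there are points of S arbitrarily close to c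
    rw [eventually_nhdsWithin_iff] at h3
    rw [Metric.eventually_nhds_iff] at h3
    obtain ⟨r, hr, hball⟩ := h3
    obtain ⟨s, hsS, hs⟩ := exists_lt_of_lt_csSup hSne (by linarith : c - r < c)
    have hsc : s ≤ c := le_csSup hSbdd hsS
    have hdist : dist s c < r := by
      rw [Real.dist_eq, abs_lt]; constructor <;> linarith
    have := hball hdist (le_trans hT hsS.1.1)
    exact absurd hsS.2 (not_le.mpr this)
  -- Step 2 : c < t₁
  have hclt : c < t₁ := by
    rcases lt_or_eq_of_le hct₁ with h | h
    · exact h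
    · exact absurd (h ▸ hAc) (not_le.mpr ht₁)
  -- Step 3 : derivative of φ at c
  set D := C * ((3:ℝ)/4 * c ^ ((3:ℝ)/4 - 1)) + 8 * δ with hD
  have hφderiv : HasDerivAt φ D c := by
    refine HasDerivAt.add ?_ ?_
    · exact (Real.hasDerivAt_rpow_const (Or.inl (ne_of_gt hc0))).const_mul C
    · simpa using (hasDerivAt_id c).const_mul (8 * δ)
  -- the Dini bound at c is ≤ D - δ
  have hrpow : c ^ ((3:ℝ)/4 - 1) = c ^ ((3:ℝ)/4) / c := by
    rw [Real.rpow_sub hc0, Real.rpow_one]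
  have hbound : 3 / (4 * c) * A c + ε c ≤ D - δ := by
    have hεc : ε c ≤ δ := hεδ c hTc
    have hcoef : (0:ℝ) < 3 / (4 * c) := by positivity
    have h1 : 3 / (4 * c) * A c ≤ 3 / (4 * c) * φ c :=
      mul_le_mul_of_nonneg_left hAc (le_of_lt hcoef)
    have h2 : 3 / (4 * c) * φ c = C * ((3:ℝ)/4 * c ^ ((3:ℝ)/4 - 1)) + 6 * δ := by
      simp only [hφ, hrpow]
      field_simp
      ring
    simp only [hD]
    linarith
  -- from the Dini derivative bound, get eventual slope bound for A
  have hAd := hdini c hcT₁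
  have hlt : upperDiniDeriv A c < ((D - δ / 2 : ℝ) : EReal) := by
    refine lt_of_le_of_lt hAd ?_
    rw [EReal.coe_lt_coe_iff]
    linarith
  have hAslope : ∀ᶠ h in nhdsWithin (0:ℝ) (Set.Ioi 0),
      (A (c + h) - A c) / h < D - δ / 2 := by
    have := eventually_lt_of_limsup_lt hlt
    filter_upwards [this] with h hh
    exact_mod_cast hh
  -- slope of φ tends to D from the right
  have hφslope : ∀ᶠ h in nhdsWithin (0:ℝ) (Set.Ioi 0),
      D - δ / 2 < (φ (c + h) - φ c) / h := by
    have htend : Tendsto (fun h : ℝ => c + h) (nhdsWithin 0 (Set.Ioi 0))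
        (nhdsWithin c {c}ᶜ) := by
      apply Tendsto.inf
      · simpa using (tendsto_id.const_add c : Tendsto (fun h : ℝ => c + h) (nhds 0) (nhds (c + 0)))
      · rw [tendsto_principal_principal]
        intro h hh
        simp only [Set.mem_compl_iff, Set.mem_singleton_iff]
        have : (0:ℝ) < h := hh
        intro hceq
        nlinarith [hceq]
    have hs := (hasDerivAt_iff_tendsto_slope.1 hφderiv).comp htend
    have heq : ∀ᶠ h in nhdsWithin (0:ℝ) (Set.Ioi 0),
        (slope φ c ∘ fun h => c + h) h = (φ (c + h) - φ c) / h := by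
      filter_upwards [self_mem_nhdsWithin] with h hh
      show slope φ c (c + h) = (φ (c + h) - φ c) / h
      rw [slope_def_field, add_sub_cancel_left]
    have hs' : Tendsto (fun h : ℝ => (φ (c + h) - φ c) / h)
        (nhdsWithin 0 (Set.Ioi 0)) (nhds D) := hs.congr' heq
    exact hs'.eventually (eventually_gt_nhds (by linarith : D - δ / 2 < D))
  have hsmall : ∀ᶠ h in nhdsWithin (0:ℝ) (Set.Ioi 0), h ∈ Set.Ioo (0:ℝ) (t₁ - c) :=
    eventually_of_mem (Ioo_mem_nhdsGT_of_mem ⟨le_refl 0, by linarith⟩) fun x hx => hx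
  obtain ⟨h, hA1, hφ1, hmem⟩ := (hAslope.and (hφslope.and hsmall)).exists
  have hh0 : 0 < h := hmem.1
  have hslopes : (A (c + h) - A c) / h < (φ (c + h) - φ c) / h := lt_trans hA1 hφ1
  have hdiff : A (c + h) - A c < φ (c + h) - φ c :=
    (div_lt_div_iff_of_pos_right hh0).mp hslopes
  have hnew : A (c + h) < φ (c + h) := by linarith
  have hmemS : c + h ∈ S := by
    refine ⟨⟨by linarith, by have := hmem.2; linarith⟩, le_of_lt hnew⟩
  have : c + h ≤ c := le_csSup hSbdd hmemS
  linarith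

theorem stmt2 (T₁ : ℝ) (hT₁ : 0 < T₁) (A ε : ℝ → ℝ)
    (hlsc : LowerSemicontinuousOn A (Set.Ici T₁))
    (hnonneg : ∀ t ∈ Set.Ici T₁, 0 ≤ A t)
    (hε : Tendsto ε atTop (nhds 0))
    (hdini : ∀ t₀ ∈ Set.Ici T₁,
      upperDiniDeriv A t₀ ≤ (((3 / (4 * t₀)) * A t₀ + ε t₀ : ℝ) : EReal)) :
    Tendsto (fun t : ℝ => t⁻¹ * A t) atTop (nhds 0) := by
  rw [tendsto_order]
  have hlow : ∀ᶠ t in atTop, (0:ℝ) ≤ t⁻¹ * A t := by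
    filter_upwards [eventually_ge_atTop T₁] with t ht
    have ht0 : 0 < t := lt_of_lt_of_le hT₁ ht
    exact mul_nonneg (le_of_lt (inv_pos.mpr ht0)) (hnonneg t ht)
  constructor
  · intro a ha
    filter_upwards [hlow] with t ht
    linarith
  · intro b hb
    set δ := b / 16 with hδdef
    have hδ : 0 < δ := by positivity
    -- choose T with ε t ≤ δ for t ≥ T
    have hev : ∀ᶠ t in atTop, ε t ≤ δ := by
      have := hε.eventually (eventually_le_nhds hδ)
      simpa using this
    obtain ⟨T₀, hT₀⟩ := hev.exists_forall_of_atTop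
    set T := max T₀ T₁ with hTdef
    have hTT₁ : T₁ ≤ T := le_max_right _ _
    have hT0 : 0 < T := lt_of_lt_of_le hT₁ hTT₁
    set C := A T / T ^ ((3:ℝ)/4) with hCdef
    have hTpow : (0:ℝ) < T ^ ((3:ℝ)/4) := Real.rpow_pos_of_pos hT0 _
    have hCT : A T ≤ C * T ^ ((3:ℝ)/4) := by
      rw [hCdef, div_mul_cancel₀ _ (ne_of_gt hTpow)]
    have hcomp := dini_comparison T₁ hT₁ A ε hlsc hdini δ hδ T hTT₁
      (fun t ht => hT₀ t (le_trans (le_max_left _ _) ht)) C hCT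
    -- C * t^{-1/4} → 0
    have htend : Tendsto (fun t : ℝ => C * t ^ (-(1:ℝ)/4)) atTop (nhds 0) := by
      have : Tendsto (fun t : ℝ => t ^ (-((1:ℝ)/4))) atTop (nhds 0) :=
        tendsto_rpow_neg_atTop (by norm_num)
      have h2 := this.const_mul C
      rw [mul_zero] at h2
      convert h2 using 2 with t
      norm_num
    have hev2 : ∀ᶠ t in atTop, C * t ^ (-(1:ℝ)/4) < 8 * δ := by
      exact htend.eventually (eventually_lt_nhds (by positivity))
    filter_upwards [hev2, eventually_ge_atTop T, eventually_gt_atTop (0:ℝ)]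
      with t h1 h2 h3
    have hAt := hcomp t h2
    have hinv : (0:ℝ) < t⁻¹ := inv_pos.mpr h3
    have key : t⁻¹ * A t ≤ C * t ^ (-(1:ℝ)/4) + 8 * δ := by
      have h4 : t⁻¹ * A t ≤ t⁻¹ * (C * t ^ ((3:ℝ)/4) + 8 * δ * t) :=
        mul_le_mul_of_nonneg_left hAt (le_of_lt hinv)
      have h5 : t⁻¹ * (C * t ^ ((3:ℝ)/4) + 8 * δ * t)
          = C * t ^ (-(1:ℝ)/4) + 8 * δ := by
        have ht34 : t⁻¹ * t ^ ((3:ℝ)/4) = t ^ (-(1:ℝ)/4) := by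
          rw [show (-(1:ℝ)/4) = (-1) + (3:ℝ)/4 by norm_num, Real.rpow_add h3,
            Real.rpow_neg_one]
        rw [mul_add]
        congr 1
        · rw [show t⁻¹ * (C * t ^ ((3:ℝ)/4)) = C * (t⁻¹ * t ^ ((3:ℝ)/4)) by ring, ht34]
        · rw [show t⁻¹ * (8 * δ * t) = 8 * δ * (t⁻¹ * t) by ring,
            inv_mul_cancel₀ (ne_of_gt h3), mul_one]
      rw [h5] at h4
      exact h4
    have : t⁻¹ * A t < 16 * δ := by linarith
    rw [hδdef] at this
    linarith
end

section
/- Let p₁, p₂, q₁, q₂ be integers with p₁·q₂ − p₂·q₁ ≠ 0. Let S¹ := {z ∈ ℂ : |z| = 1} and T := S¹ × S¹. Let F : S¹ × [0, 1] → T × [0, 1] be a continuous map such that F(z, 0) = ((z^{p₁}, z^{p₂}), 0) and F(z, 1) = ((z^{p₁}, z^{p₂}), 1) for all z ∈ S¹. Then there exist z, w ∈ S¹ and s ∈ [0, 1] such that F(z, s) = ((w^{q₁}, w^{q₂}), 1/2); that is, the image of F intersects the image of the loop w ↦ ((w^{q₁}, w^{q₂}), 1/2). -/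
/-!
Write `(q₁, q₂) = g • (Q₁, Q₂)` with `Q₁, Q₂` coprime. The loop `w ↦ (w ^ q₁, w ^ q₂)` is then
the fibre over `1` of `(a, b) ↦ a ^ Q₂ / b ^ Q₁ : T → S¹`, and this map sends the loop
`z ↦ (z ^ p₁, z ^ p₂)` to `z ↦ z ^ d` with `d = p₁ Q₂ - p₂ Q₁ ≠ 0`. So `F` induces a homotopy in
the annulus `S¹ × [0, 1]` from `z ↦ (z ^ d, 0)` to `z ↦ (z ^ d, 1)`, and it suffices that such a
homotopy meets `(1, 1/2)`. If it did not, composing it with `(c, τ) ↦ τ c - (1 - τ)`, which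
vanishes only at `(1, 1/2)` and is `-1` on the bottom circle, and normalising to the unit circle
would give a null-homotopy of `z ↦ z ^ d`, which homotopy lifting along `exp : ℝ → S¹` forbids.
-/

open unitInterval

theorem Circle.exists_pow_eq (v : Circle) {n : ℕ} (hn : n ≠ 0) : ∃ w : Circle, w ^ n = v := by
  obtain ⟨θ, rfl⟩ := Circle.exp_surjective v
  refine ⟨Circle.exp (θ / n), ?_⟩
  rw [← Circle.exp_natCast_mul, mul_div_cancel₀ _ (Nat.cast_ne_zero.2 hn)]

theorem exists_zpow_eq_of_isCoprime {G : Type*} [CommGroup G] {Q₁ Q₂ : ℤ} (hQ : IsCoprime Q₁ Q₂)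
    {a b : G} (h : a ^ Q₂ = b ^ Q₁) : ∃ v : G, v ^ Q₁ = a ∧ v ^ Q₂ = b := by
  obtain ⟨A, B, hAB⟩ := hQ
  refine ⟨a ^ A * b ^ B, ?_, ?_⟩
  · rw [mul_zpow, ← zpow_mul, ← zpow_mul, mul_comm B, zpow_mul b, ← h, ← zpow_mul, ← zpow_add,
      mul_comm Q₂, hAB, zpow_one]
  · rw [mul_zpow, ← zpow_mul, ← zpow_mul, mul_comm A, zpow_mul a, h, ← zpow_mul, ← zpow_add,
      mul_comm Q₁, hAB, zpow_one]

theorem Circle.not_homotopic_const_zpow (c : Circle) {d : ℤ} (hd : d ≠ 0) :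
    ¬ (ContinuousMap.const Circle c).Homotopic ⟨(· ^ d), continuous_zpow d⟩ := by
  rintro ⟨H⟩
  have cov := Circle.isCoveringMap_exp
  let loop : C(I, Circle) := Circle.exp.comp ⟨fun t => 2 * Real.pi * t, by fun_prop⟩
  let K : C(I × I, Circle) := H.toContinuousMap.comp (.prodMap (.id I) loop)
  obtain ⟨θ, hθ⟩ := Circle.exp_surjective c
  let L := cov.liftHomotopy K (.const I θ) (fun t => by simp [K, hθ])
  have hL (st : I × I) : Circle.exp (L st) = K st := congr_fun (cov.liftHomotopy_lifts ..) st
  have hL₀ (t : I) : L (0, t) = θ := cov.liftHomotopy_zero ..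
  -- `s ↦ L (s, 1)` and `s ↦ L (s, 0)` lift the same path, since `loop 1 = loop 0`.
  have h_closed : L (1, 1) = L (1, 0) := by
    have := cov.eq_of_comp_eq (g₁ := fun s => L (s, 1)) (g₂ := fun s => L (s, 0))
      (by fun_prop) (by fun_prop) (funext fun s => by simp [hL, K, loop]) 0
      ((hL₀ 1).trans (hL₀ 0).symm)
    exact congr_fun this 1
  have h_winding : L (1, 1) = L (1, 0) + d * (2 * Real.pi) := by
    have := cov.eq_of_comp_eq (g₁ := fun t => L (1, t))
      (g₂ := fun t => L (1, 0) + d * (2 * Real.pi * t))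
      (by fun_prop) (by fun_prop) (funext fun t => by simp [hL, K, loop]) 0 (by simp)
    simpa using congr_fun this 1
  have : (d : ℝ) * (2 * Real.pi) = 0 := by linarith
  simp [hd, Real.pi_ne_zero] at this

noncomputable def annulusToPlane (x : Circle × I) : ℂ :=
  ((x.2 : ℝ) : ℂ) * x.1 - (1 - ((x.2 : ℝ) : ℂ))

theorem continuous_annulusToPlane : Continuous annulusToPlane := by
  unfold annulusToPlane
  fun_prop

theorem eq_of_annulusToPlane_eq_zero {x : Circle × I} (hx : annulusToPlane x = 0) :
    x = (1, ⟨1 / 2, by norm_num⟩) := by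
  obtain ⟨c, τ, hτ⟩ := x
  have hτc : (τ : ℂ) * c = 1 - τ := sub_eq_zero.1 hx
  have hτ_half : τ = 1 / 2 := by
    have := congrArg norm hτc
    rw [norm_mul, Circle.norm_coe, mul_one, Complex.norm_real, ← Complex.ofReal_one,
      ← Complex.ofReal_sub, Complex.norm_real, Real.norm_of_nonneg hτ.1,
      Real.norm_of_nonneg (sub_nonneg.2 hτ.2)] at this
    linarith
  subst hτ_half
  refine Prod.ext (Circle.coe_injective ?_) rfl
  push_cast at hτc
  simp only [Circle.coe_one]
  linear_combination 2 * hτc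

theorem exists_apply_eq_of_annulus_homotopy {d : ℤ} (hd : d ≠ 0) {G : Circle × I → Circle × I}
    (hG : Continuous G) (h₀ : ∀ z, G (z, 0) = (z ^ d, 0)) (h₁ : ∀ z, G (z, 1) = (z ^ d, 1)) :
    ∃ x, G x = (1, ⟨1 / 2, by norm_num⟩) := by
  by_contra! hG_avoids
  have hne (x : Circle × I) : annulusToPlane (G x) ≠ 0 :=
    fun h => hG_avoids x (eq_of_annulusToPlane_eq_zero h)
  refine Circle.not_homotopic_const_zpow (-1) hd ⟨{
    toFun := fun sz => ⟨NormedSpace.normalize (annulusToPlane (G (sz.2, sz.1))),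
      mem_sphere_zero_iff_norm.2 (NormedSpace.norm_normalize_eq_one_iff.2 (hne _))⟩
    continuous_toFun := ?_
    map_zero_left := fun z => ?_
    map_one_left := fun z => ?_ }⟩
  · have hu : Continuous fun sz : I × Circle => annulusToPlane (G (sz.2, sz.1)) :=
      continuous_annulusToPlane.comp (hG.comp continuous_swap)
    exact ((hu.norm.inv₀ fun _ => norm_ne_zero_iff.2 (hne _)).smul hu).subtype_mk _
  · apply Circle.coe_injective
    simp [h₀, annulusToPlane, NormedSpace.normalize]
  · apply Circle.coe_injective
    simp [h₁, annulusToPlane, NormedSpace.normalize, Circle.norm_coe]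

theorem stmt11 (p₁ p₂ q₁ q₂ : ℤ) (h : p₁ * q₂ - p₂ * q₁ ≠ 0)
    (F : Circle × unitInterval → (Circle × Circle) × unitInterval)
    (hF : Continuous F)
    (h0 : ∀ z : Circle, F (z, 0) = ((z ^ p₁, z ^ p₂), 0))
    (h1 : ∀ z : Circle, F (z, 1) = ((z ^ p₁, z ^ p₂), 1)) :
    ∃ (z w : Circle) (s : unitInterval),
      F (z, s) = ((w ^ q₁, w ^ q₂), ⟨1 / 2, by norm_num⟩) := by
  have hq : 0 < Int.gcd q₁ q₂ := Int.gcd_pos_iff.2 (by contrapose! h; simp [h])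
  obtain ⟨g, Q₁, Q₂, hg, hQ, rfl, rfl⟩ := Int.exists_gcd_one' hq
  have hd : p₁ * Q₂ - p₂ * Q₁ ≠ 0 := by
    contrapose! h
    linear_combination (g : ℤ) * h
  have hpow (z : Circle) : (z ^ p₁) ^ Q₂ / (z ^ p₂) ^ Q₁ = z ^ (p₁ * Q₂ - p₂ * Q₁) := by
    rw [← zpow_mul, ← zpow_mul, zpow_sub, div_eq_mul_inv]
  let G (x : Circle × I) : Circle × I := ((F x).1.1 ^ Q₂ / (F x).1.2 ^ Q₁, (F x).2)
  obtain ⟨x, hx⟩ := exists_apply_eq_of_annulus_homotopy hd (G := G) (by fun_prop)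
    (fun z => by simp [G, h0, hpow]) (fun z => by simp [G, h1, hpow])
  obtain ⟨hc, hs⟩ := Prod.ext_iff.1 hx
  obtain ⟨v, hv₁, hv₂⟩ :=
    exists_zpow_eq_of_isCoprime (Int.isCoprime_iff_gcd_eq_one.2 hQ) (div_eq_one.1 hc)
  obtain ⟨w, rfl⟩ := Circle.exists_pow_eq v hg.ne'
  refine ⟨x.1, w, x.2, ?_⟩
  rw [mul_comm Q₁, mul_comm Q₂, zpow_mul, zpow_mul, zpow_natCast, hv₁, hv₂]
  exact Prod.ext rfl hs
end
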